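/- Let d ≥ 2 and let i₁, i₂, j₁, j₂, i₁', i₂', j₁', j₂' ∈ Fin d. Then ∫ U, U(i₁,j₁) · U(i₂,j₂) · conj(U(i₁',j₁')) · conj(U(i₂',j₂')) dμ_d = (δ_{i₁ i₁'} δ_{i₂ i₂'} δ_{j₁ j₁'} δ_{j₂ j₂'} + δ_{i₁ i₂'} δ_{i₂ i₁'} δ_{j₁ j₂'} δ_{j₂ j₁'}) / (d² − 1) − (δ_{i₁ i₁'} δ_{i₂ i₂'} δ_{j₁ j₂'} δ_{j₂ j₁'} + δ_{i₁ i₂'} δ_{i₂ i₁'} δ_{j₁ j₁'} δ_{j₂ j₂'}) / (d(d² − 1)), where δ_{xy} is 1 if x = y and 0 otherwise. -/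

import Mathlib

open MeasureTheory Matrix
open scoped ComplexConjugate

noncomputable section

local instance {d : ℕ} : MeasurableSpace (Matrix.unitaryGroup (Fin d) ℂ) := borel _

/-- Kronecker delta, valued in `ℂ`. -/
def kdelta {α : Type*} [DecidableEq α] (x y : α) : ℂ := if x = y then 1 else 0

/-!
Write `F(i₁ i₂ j₁ j₂; i₁' i₂' j₁' j₂')` for the fourth moment. Haar measure is invariant under
multiplication by permutation matrices and by diagonal phase matrices on either side. Phases show
that `F` vanishes unless the row pairs `{i₁, i₂}, {i₁', i₂'}` agree as multisets, and likewise the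
column pairs; permutations show that otherwise `F` depends only on which indices coincide, leaving
five unknowns. Orthonormality of the rows and columns of `U` gives four linear relations among
them, and invariance under a Householder reflection mixing two rows gives the fifth,
`E|U₁₁|⁴ = 2 E|U₁₁ U₂₁|²`. Solving yields `Wg(1) = 1/(d² - 1)` and `Wg(τ) = -1/(d(d² - 1))`.
-/

theorem kdelta_self {α : Type*} [DecidableEq α] (x : α) : kdelta x x = 1 := if_pos rfl

theorem kdelta_of_ne {α : Type*} [DecidableEq α] {x y : α} (h : x ≠ y) : kdelta x y = 0 :=
  if_neg h

theorem natCast_sq_sub_one_ne_zero {k : ℕ} (hk : 1 < k) : (k : ℂ) ^ 2 - 1 ≠ 0 := by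
  rw [sub_ne_zero]
  exact_mod_cast (Nat.one_lt_pow two_ne_zero hk).ne'

theorem Multiset.pair_eq_pair_iff {α : Type*} {a b c d : α} :
    ({a, b} : Multiset α) = {c, d} ↔ a = c ∧ b = d ∨ a = d ∧ b = c := by
  refine ⟨fun h => ?_, ?_⟩
  · simp only [Multiset.insert_eq_cons, Multiset.cons_eq_cons, Multiset.singleton_inj,
      Multiset.singleton_eq_cons_iff, exists_eq_right_right, and_true] at h
    rcases h with h | ⟨-, hbc, hda⟩
    exacts [Or.inl h, Or.inr ⟨hda.symm, hbc⟩]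
  · rintro (⟨rfl, rfl⟩ | ⟨rfl, rfl⟩)
    exacts [rfl, Multiset.pair_comm _ _]

theorem Equiv.Perm.exists_apply_eq_and_apply_eq {α : Type*} [DecidableEq α] {a b c d : α}
    (h : a = b ↔ c = d) : ∃ σ : Equiv.Perm α, σ a = c ∧ σ b = d := by
  by_cases hab : a = b
  · subst hab
    obtain rfl := h.mp rfl
    exact ⟨Equiv.swap a c, Equiv.swap_apply_left a c, Equiv.swap_apply_left a c⟩
  · have hcd : c ≠ d := fun hcd => hab (h.mpr hcd)
    obtain ⟨σ, hσ⟩ := Equiv.Perm.exists_extending_pair ![a, b] ![c, d]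
      (by simp [Function.Injective, Fin.forall_fin_two, hab, Ne.symm hab])
      (by simp [Function.Injective, Fin.forall_fin_two, hcd, Ne.symm hcd])
    exact ⟨σ, hσ 0, hσ 1⟩

theorem Fintype.sum_sum_eq_of_diag_of_offDiag {ι : Type*} [Fintype ι] {f : ι → ι → ℂ} {a b : ℂ}
    (hdiag : ∀ j, f j j = a) (hoff : ∀ j l, j ≠ l → f j l = b) :
    ∑ j, ∑ l, f j l = Fintype.card ι * (a + (Fintype.card ι - 1) * b) := by
  classical
  have hrow (j : ι) : ∑ l, f j l = a + (Fintype.card ι - 1) * b := by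
    have : Nonempty ι := ⟨j⟩
    rw [Fintype.sum_eq_add_sum_compl j, hdiag,
      Finset.sum_congr rfl fun l hl => hoff j l fun h => by simp [h] at hl,
      Finset.sum_const, Finset.card_compl, Finset.card_singleton, nsmul_eq_mul,
      Nat.cast_sub Fintype.card_pos, Nat.cast_one]
  simp [hrow, mul_add]

theorem exists_phase_ne_one {n : Type*} [DecidableEq n] {a b a' b' : n}
    (h : ({a, b} : Multiset n) ≠ {a', b'}) :
    ∃ z : n → ℂ, (∀ k, star (z k) * z k = 1) ∧ z a * z b * conj (z a') * conj (z b') ≠ 1 := by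
  obtain ⟨k, hk⟩ := not_forall.mp (mt Multiset.ext.mpr h)
  set ζ := Complex.exp (2 * Real.pi * Complex.I / 3)
  have hζ : IsPrimitiveRoot ζ 3 := Complex.isPrimitiveRoot_exp 3 (by norm_num)
  have hunit (m : ℕ) : conj (ζ ^ m) * ζ ^ m = 1 := by
    rw [← Complex.normSq_eq_conj_mul_self, Complex.normSq_eq_norm_sq, norm_pow,
      hζ.norm'_eq_one (by norm_num)]
    norm_num
  -- `ζ` on index `k`: both multiplicities of `k` are at most `2 < 3 = orderOf ζ`
  set z : n → ℂ := fun t => ζ ^ Multiset.count k {t}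
  have hpair (x y : n) : z x * z y = ζ ^ Multiset.count k {x, y} := by
    rw [← pow_add, ← Multiset.count_add, Multiset.singleton_add, Multiset.insert_eq_cons]
  refine ⟨z, fun t => hunit _, fun h1 => hk (hζ.pow_inj ?_ ?_ ?_)⟩
  · exact (Multiset.count_le_card _ _).trans_lt (by simp)
  · exact (Multiset.count_le_card _ _).trans_lt (by simp)
  · rw [mul_assoc, ← map_mul, hpair, hpair] at h1
    linear_combination ζ ^ Multiset.count k {a', b'} * h1 -
      ζ ^ Multiset.count k {a, b} * hunit (Multiset.count k {a', b'})

instance MeasureTheory.Measure.isMulRightInvariant_of_isProbabilityMeasure {G : Type*} [Group G]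
    [TopologicalSpace G] [IsTopologicalGroup G] [LocallyCompactSpace G] [MeasurableSpace G]
    [BorelSpace G] (μ : Measure G) [μ.IsHaarMeasure] [IsProbabilityMeasure μ] :
    μ.IsMulRightInvariant :=
  ⟨fun g => have := isProbabilityMeasure_map (μ := μ) (measurable_mul_const g).aemeasurable
    isHaarMeasure_eq_of_isProbabilityMeasure _ μ⟩

namespace Matrix.UnitaryGroup

variable {n : Type*} [Fintype n] [DecidableEq n]

instance {𝕜 : Type*} [RCLike 𝕜] : CompactSpace (unitaryGroup n 𝕜) := by
  have hbdd : (unitaryGroup n 𝕜 : Set (Matrix n n 𝕜)) ⊆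
      Set.univ.pi fun _ => Set.univ.pi fun _ => Metric.closedBall 0 1 :=
    fun U hU i _ j _ => by simpa using entry_norm_bound_of_unitary hU i j
  exact isCompact_iff_compactSpace.mp <|
    (isCompact_univ_pi fun _ => isCompact_univ_pi fun _ => isCompact_closedBall _ _)
      |>.of_isClosed_subset (isClosed_unitary (R := Matrix n n 𝕜)) hbdd

theorem diagonal_mem_unitaryGroup {α : Type*} [CommRing α] [StarRing α] {z : n → α}
    (hz : ∀ i, star (z i) * z i = 1) : diagonal z ∈ unitaryGroup n α := by
  rw [mem_unitaryGroup_iff', star_eq_conjTranspose, diagonal_conjTranspose, diagonal_mul_diagonal]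
  simp [hz]

theorem permMatrix_mem_unitaryGroup {α : Type*} [CommRing α] [StarRing α] (σ : Equiv.Perm n) :
    σ.permMatrix α ∈ unitaryGroup n α := by
  rw [mem_unitaryGroup_iff', star_eq_conjTranspose, conjTranspose_permMatrix, ← permMatrix_mul,
    mul_inv_cancel, permMatrix_one]

theorem one_sub_two_smul_vecMulVec_mem_unitaryGroup {α : Type*} [CommRing α] [StarRing α]
    {v : n → α} (hv : star v ⬝ᵥ v = 1) :
    1 - (2 : α) • vecMulVec v (star v) ∈ unitaryGroup n α := by
  have hP : vecMulVec v (star v) * vecMulVec v (star v) = vecMulVec v (star v) := by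
    rw [vecMulVec_mul_vecMulVec, hv, one_smul]
  rw [mem_unitaryGroup_iff', star_eq_conjTranspose, conjTranspose_sub, conjTranspose_one,
    conjTranspose_smul, conjTranspose_vecMulVec, star_star]
  simp only [star_ofNat, sub_mul, mul_sub, one_mul, mul_one, smul_mul_smul, hP]
  module

theorem exists_row_mixing_unitary {z o : n} (hzo : z ≠ o) :
    ∃ V : unitaryGroup n ℂ, ∀ (U : unitaryGroup n ℂ) (j : n),
      ((V * U : unitaryGroup n ℂ) : Matrix n n ℂ) z j =
        7 / 25 * (U : Matrix n n ℂ) z j - 24 / 25 * (U : Matrix n n ℂ) o j := by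
  set v : n → ℂ := Pi.single z (3 / 5) + Pi.single o (4 / 5)
  have hv : star v = v := by simp [v]
  have hvv : star v ⬝ᵥ v = 1 := by
    rw [hv]
    norm_num [v, dotProduct_add, hzo, hzo.symm]
  refine ⟨⟨_, one_sub_two_smul_vecMulVec_mem_unitaryGroup hvv⟩, fun U j => ?_⟩
  change ((1 - (2 : ℂ) • vecMulVec v (star v) : Matrix n n ℂ) * (U : Matrix n n ℂ)) z j = _
  rw [hv, Matrix.sub_mul, Matrix.one_mul, Matrix.smul_mul, vecMulVec_mul]
  simp only [v, add_vecMul, single_vecMul, sub_apply, smul_apply, vecMulVec_apply, Pi.add_apply,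
    Pi.single_eq_same, Pi.single_eq_of_ne' hzo.symm, add_zero, Pi.smul_apply, row_apply,
    smul_eq_mul]
  ring

@[fun_prop]
theorem continuous_entry (i j : n) :
    Continuous fun U : unitaryGroup n ℂ => (U : Matrix n n ℂ) i j :=
  (continuous_apply_apply i j).comp continuous_subtype_val

-- `∑_{σ, τ ∈ S₂} δ(i, i' ∘ σ) δ(j, j' ∘ τ) Wg(σ τ⁻¹)` with `Wg(1) = 1/(d² - 1)` and
-- `Wg(τ) = -1/(d(d² - 1))`, `d = card n`
def weingartenSum (i₁ i₂ j₁ j₂ i₁' i₂' j₁' j₂' : n) : ℂ :=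
  (kdelta i₁ i₁' * kdelta i₂ i₂' * kdelta j₁ j₁' * kdelta j₂ j₂'
      + kdelta i₁ i₂' * kdelta i₂ i₁' * kdelta j₁ j₂' * kdelta j₂ j₁')
      / ((Fintype.card n : ℂ) ^ 2 - 1)
    - (kdelta i₁ i₁' * kdelta i₂ i₂' * kdelta j₁ j₂' * kdelta j₂ j₁'
      + kdelta i₁ i₂' * kdelta i₂ i₁' * kdelta j₁ j₁' * kdelta j₂ j₂')
      / ((Fintype.card n : ℂ) * ((Fintype.card n : ℂ) ^ 2 - 1))

theorem weingartenSum_swap_conj (i₁ i₂ j₁ j₂ i₁' i₂' j₁' j₂' : n) :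
    weingartenSum i₁ i₂ j₁ j₂ i₁' i₂' j₁' j₂' = weingartenSum i₁ i₂ j₁ j₂ i₂' i₁' j₂' j₁' := by
  unfold weingartenSum
  ring

theorem weingartenSum_eq_zero_of_rows_ne {i₁ i₂ i₁' i₂' : n}
    (h : ({i₁, i₂} : Multiset n) ≠ {i₁', i₂'}) (j₁ j₂ j₁' j₂' : n) :
    weingartenSum i₁ i₂ j₁ j₂ i₁' i₂' j₁' j₂' = 0 := by
  rw [Ne, Multiset.pair_eq_pair_iff, not_or, not_and_or, not_and_or] at h
  rcases h with ⟨h₁ | h₁, h₂ | h₂⟩ <;> simp [weingartenSum, kdelta, h₁, h₂]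

theorem weingartenSum_eq_zero_of_cols_ne {j₁ j₂ j₁' j₂' : n}
    (h : ({j₁, j₂} : Multiset n) ≠ {j₁', j₂'}) (i₁ i₂ i₁' i₂' : n) :
    weingartenSum i₁ i₂ j₁ j₂ i₁' i₂' j₁' j₂' = 0 := by
  rw [Ne, Multiset.pair_eq_pair_iff, not_or, not_and_or, not_and_or] at h
  rcases h with ⟨h₁ | h₁, h₂ | h₂⟩ <;> simp [weingartenSum, kdelta, h₁, h₂]

section Moments

variable [MeasurableSpace (unitaryGroup n ℂ)] (μ : Measure (unitaryGroup n ℂ))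

def quarticMoment (i₁ i₂ j₁ j₂ i₁' i₂' j₁' j₂' : n) : ℂ :=
  ∫ U : unitaryGroup n ℂ, (U : Matrix n n ℂ) i₁ j₁ * (U : Matrix n n ℂ) i₂ j₂ *
    conj ((U : Matrix n n ℂ) i₁' j₁') * conj ((U : Matrix n n ℂ) i₂' j₂') ∂μ

theorem quarticMoment_swap (i₁ i₂ j₁ j₂ i₁' i₂' j₁' j₂' : n) :
    quarticMoment μ i₁ i₂ j₁ j₂ i₁' i₂' j₁' j₂' = quarticMoment μ i₂ i₁ j₂ j₁ i₁' i₂' j₁' j₂' := by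
  unfold quarticMoment
  congr 1; ext U
  ring

theorem quarticMoment_swap_conj (i₁ i₂ j₁ j₂ i₁' i₂' j₁' j₂' : n) :
    quarticMoment μ i₁ i₂ j₁ j₂ i₁' i₂' j₁' j₂' = quarticMoment μ i₁ i₂ j₁ j₂ i₂' i₁' j₂' j₁' := by
  unfold quarticMoment
  congr 1; ext U
  ring

variable [BorelSpace (unitaryGroup n ℂ)]

theorem integrable_of_continuous [IsFiniteMeasure μ] {f : unitaryGroup n ℂ → ℂ}
    (hf : Continuous f) : Integrable f μ :=
  hf.integrable_of_hasCompactSupport (.of_compactSpace f)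

theorem integral_sum_mul_sum_mul_conj_sum_mul_conj_sum [IsFiniteMeasure μ] (s : Finset n)
    (a b c e : n → ℂ) (j₁ j₂ j₁' j₂' : n) :
    ∫ U : unitaryGroup n ℂ, (∑ k ∈ s, a k * (U : Matrix n n ℂ) k j₁) *
        (∑ l ∈ s, b l * (U : Matrix n n ℂ) l j₂) *
        conj (∑ k' ∈ s, c k' * (U : Matrix n n ℂ) k' j₁') *
        conj (∑ l' ∈ s, e l' * (U : Matrix n n ℂ) l' j₂') ∂μ =
      ∑ k ∈ s, ∑ l ∈ s, ∑ k' ∈ s, ∑ l' ∈ s,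
        a k * b l * conj (c k') * conj (e l') * quarticMoment μ k l j₁ j₂ k' l' j₁' j₂' := by
  simp only [quarticMoment, ← integral_const_mul]
  simp (disch := exact fun _ _ => integrable_of_continuous μ (by fun_prop)) only
    [← integral_finsetSum]
  congr 1; ext U
  simp only [map_sum, map_mul, mul_assoc]
  simp only [Finset.sum_mul]
  simp only [Finset.mul_sum]
  ac_rfl

theorem sum_sum_quarticMoment_rows [IsProbabilityMeasure μ] (a b a' b' : n) :
    ∑ j, ∑ l, quarticMoment μ a b j l a' b' j l = kdelta a a' * kdelta b b' := by
  have horth (U : unitaryGroup n ℂ) (x y : n) :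
      ∑ j, (U : Matrix n n ℂ) x j * conj ((U : Matrix n n ℂ) y j) = kdelta x y := by
    simpa [Matrix.mul_apply, Matrix.one_apply, kdelta] using
      congrFun₂ (mem_unitaryGroup_iff.mp U.2) x y
  simp (disch := exact fun _ _ => integrable_of_continuous μ (by fun_prop)) only
    [quarticMoment, ← integral_finsetSum]
  calc _ = ∫ _ : unitaryGroup n ℂ, kdelta a a' * kdelta b b' ∂μ := by
        congr 1; ext U
        rw [← horth U a a', ← horth U b b', Finset.sum_mul_sum]
        ac_rfl
    _ = _ := by simp

theorem sum_sum_quarticMoment_cols [IsProbabilityMeasure μ] (a b a' b' : n) :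
    ∑ i, ∑ k, quarticMoment μ i k a b i k a' b' = kdelta a a' * kdelta b b' := by
  have horth (U : unitaryGroup n ℂ) (x y : n) :
      ∑ i, (U : Matrix n n ℂ) i x * conj ((U : Matrix n n ℂ) i y) = kdelta x y := by
    simpa [Matrix.mul_apply, Matrix.one_apply, kdelta, mul_comm, eq_comm] using
      congrFun₂ (star_mul_self U) y x
  simp (disch := exact fun _ _ => integrable_of_continuous μ (by fun_prop)) only
    [quarticMoment, ← integral_finsetSum]
  calc _ = ∫ _ : unitaryGroup n ℂ, kdelta a a' * kdelta b b' ∂μ := by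
        congr 1; ext U
        rw [← horth U a a', ← horth U b b', Finset.sum_mul_sum]
        ac_rfl
    _ = _ := by simp

section LeftInvariant

variable [μ.IsMulLeftInvariant]

theorem quarticMoment_perm_rows (σ : Equiv.Perm n) (i₁ i₂ j₁ j₂ i₁' i₂' j₁' j₂' : n) :
    quarticMoment μ (σ i₁) (σ i₂) j₁ j₂ (σ i₁') (σ i₂') j₁' j₂' =
      quarticMoment μ i₁ i₂ j₁ j₂ i₁' i₂' j₁' j₂' := by
  conv_rhs => rw [quarticMoment,
    ← integral_mul_left_eq_self _ (⟨_, permMatrix_mem_unitaryGroup σ⟩ : unitaryGroup n ℂ)]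
  simp [quarticMoment, PEquiv.toMatrix_toPEquiv_mul]

theorem quarticMoment_eq_phase_mul_rows {z : n → ℂ} (hz : ∀ k, star (z k) * z k = 1)
    (i₁ i₂ j₁ j₂ i₁' i₂' j₁' j₂' : n) :
    quarticMoment μ i₁ i₂ j₁ j₂ i₁' i₂' j₁' j₂' =
      z i₁ * z i₂ * conj (z i₁') * conj (z i₂') * quarticMoment μ i₁ i₂ j₁ j₂ i₁' i₂' j₁' j₂' := by
  rw [quarticMoment, ← integral_const_mul,
    ← integral_mul_left_eq_self _ (⟨_, diagonal_mem_unitaryGroup hz⟩ : unitaryGroup n ℂ)]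
  congr 1; ext U
  simp only [mul_val, diagonal_mul, map_mul]
  ring

theorem quarticMoment_eq_zero_of_rows_ne {i₁ i₂ i₁' i₂' : n}
    (h : ({i₁, i₂} : Multiset n) ≠ {i₁', i₂'}) (j₁ j₂ j₁' j₂' : n) :
    quarticMoment μ i₁ i₂ j₁ j₂ i₁' i₂' j₁' j₂' = 0 := by
  obtain ⟨z, hz, hne⟩ := exists_phase_ne_one h
  exact (mul_left_eq_self₀.mp (quarticMoment_eq_phase_mul_rows μ hz ..).symm).resolve_left hne

theorem quarticMoment_diag_eq_two_mul [IsFiniteMeasure μ] {z o : n} (hzo : z ≠ o) (j : n) :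
    quarticMoment μ z z j j z z j j = 2 * quarticMoment μ z o j j z o j j := by
  obtain ⟨V, hV⟩ := exists_row_mixing_unitary hzo
  set c : n → ℂ := fun k => if k = z then 7 / 25 else -24 / 25
  have hc (U : unitaryGroup n ℂ) :
      7 / 25 * (U : Matrix n n ℂ) z j - 24 / 25 * (U : Matrix n n ℂ) o j =
        ∑ k ∈ {z, o}, c k * (U : Matrix n n ℂ) k j := by
    simp only [c, ite_mul, Finset.sum_pair hzo, ↓reduceIte, hzo.symm]
    ring
  have key : ∫ U : unitaryGroup n ℂ, ((V * U : unitaryGroup n ℂ) : Matrix n n ℂ) z j *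
      ((V * U : unitaryGroup n ℂ) : Matrix n n ℂ) z j *
      conj (((V * U : unitaryGroup n ℂ) : Matrix n n ℂ) z j) *
      conj (((V * U : unitaryGroup n ℂ) : Matrix n n ℂ) z j) ∂μ = quarticMoment μ z z j j z z j j :=
    integral_mul_left_eq_self (fun U : unitaryGroup n ℂ => (U : Matrix n n ℂ) z j *
      (U : Matrix n n ℂ) z j * conj ((U : Matrix n n ℂ) z j) * conj ((U : Matrix n n ℂ) z j)) V
  simp only [hV, hc, integral_sum_mul_sum_mul_conj_sum_mul_conj_sum] at key
  have hzzoo : ({z, z} : Multiset n) ≠ {o, o} := by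
    rw [Ne, Multiset.pair_eq_pair_iff]
    simp [hzo]
  simp only [mul_ite, ite_mul, Finset.sum_pair hzo, ↓reduceIte, map_div₀, map_ofNat, map_neg, hzo,
    hzo.symm, Multiset.insert_eq_cons, ne_eq, Multiset.cons_inj_left, Multiset.cons_inj_right,
    Multiset.singleton_inj, not_false_eq_true, quarticMoment_eq_zero_of_rows_ne,
    quarticMoment_eq_zero_of_rows_ne μ hzzoo, quarticMoment_eq_zero_of_rows_ne μ hzzoo.symm,
    mul_zero, add_zero, zero_add, c] at key
  have hoo := quarticMoment_perm_rows μ (Equiv.swap z o) z z j j z z j j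
  simp only [Equiv.swap_apply_left] at hoo
  rw [hoo, quarticMoment_swap_conj μ z o j j o z j j, quarticMoment_swap μ o z j j z o j j,
    quarticMoment_swap μ o z j j o z j j, quarticMoment_swap_conj μ z o j j o z j j] at key
  -- for the moments `A` (left side) and `B` (right side), `key` reads
  -- `A = ((7⁴ + 24⁴) A + 4 (7 · 24)² B) / 25⁴`
  linear_combination (-390625 / 56448 : ℂ) * key

end LeftInvariant

section RightInvariant

variable [μ.IsMulRightInvariant]

theorem quarticMoment_perm_cols (σ : Equiv.Perm n) (i₁ i₂ j₁ j₂ i₁' i₂' j₁' j₂' : n) :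
    quarticMoment μ i₁ i₂ (σ j₁) (σ j₂) i₁' i₂' (σ j₁') (σ j₂') =
      quarticMoment μ i₁ i₂ j₁ j₂ i₁' i₂' j₁' j₂' := by
  conv_rhs => rw [quarticMoment,
    ← integral_mul_right_eq_self _ (⟨_, permMatrix_mem_unitaryGroup σ⁻¹⟩ : unitaryGroup n ℂ)]
  simp [quarticMoment, PEquiv.mul_toMatrix_toPEquiv, Equiv.Perm.inv_def]

theorem quarticMoment_eq_phase_mul_cols {z : n → ℂ} (hz : ∀ k, star (z k) * z k = 1)
    (i₁ i₂ j₁ j₂ i₁' i₂' j₁' j₂' : n) :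
    quarticMoment μ i₁ i₂ j₁ j₂ i₁' i₂' j₁' j₂' =
      z j₁ * z j₂ * conj (z j₁') * conj (z j₂') * quarticMoment μ i₁ i₂ j₁ j₂ i₁' i₂' j₁' j₂' := by
  rw [quarticMoment, ← integral_const_mul,
    ← integral_mul_right_eq_self _ (⟨_, diagonal_mem_unitaryGroup hz⟩ : unitaryGroup n ℂ)]
  congr 1; ext U
  simp only [mul_val, mul_diagonal, map_mul]
  ring

theorem quarticMoment_eq_zero_of_cols_ne {j₁ j₂ j₁' j₂' : n}
    (h : ({j₁, j₂} : Multiset n) ≠ {j₁', j₂'}) (i₁ i₂ i₁' i₂' : n) :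
    quarticMoment μ i₁ i₂ j₁ j₂ i₁' i₂' j₁' j₂' = 0 := by
  obtain ⟨z, hz, hne⟩ := exists_phase_ne_one h
  exact (mul_left_eq_self₀.mp (quarticMoment_eq_phase_mul_cols μ hz ..).symm).resolve_left hne

end RightInvariant

section Haar

variable [μ.IsHaarMeasure] [IsProbabilityMeasure μ]

theorem quarticMoment_congr_aligned {i₁ i₂ j₁ j₂ k₁ k₂ l₁ l₂ : n} (hi : i₁ = i₂ ↔ k₁ = k₂)
    (hj : j₁ = j₂ ↔ l₁ = l₂) :
    quarticMoment μ i₁ i₂ j₁ j₂ i₁ i₂ j₁ j₂ = quarticMoment μ k₁ k₂ l₁ l₂ k₁ k₂ l₁ l₂ := by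
  obtain ⟨σ, rfl, rfl⟩ := Equiv.Perm.exists_apply_eq_and_apply_eq hi
  obtain ⟨τ, rfl, rfl⟩ := Equiv.Perm.exists_apply_eq_and_apply_eq hj
  rw [quarticMoment_perm_cols, quarticMoment_perm_rows]

theorem quarticMoment_congr_swapped {i₁ i₂ j₁ j₂ k₁ k₂ l₁ l₂ : n} (hi : i₁ = i₂ ↔ k₁ = k₂)
    (hj : j₁ = j₂ ↔ l₁ = l₂) :
    quarticMoment μ i₁ i₂ j₁ j₂ i₁ i₂ j₂ j₁ = quarticMoment μ k₁ k₂ l₁ l₂ k₁ k₂ l₂ l₁ := by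
  obtain ⟨σ, rfl, rfl⟩ := Equiv.Perm.exists_apply_eq_and_apply_eq hi
  obtain ⟨τ, rfl, rfl⟩ := Equiv.Perm.exists_apply_eq_and_apply_eq hj
  rw [quarticMoment_perm_cols, quarticMoment_perm_rows]

theorem quarticMoment_linear_relations {z o : n} (hzo : z ≠ o) :
    let d : ℂ := Fintype.card n
    d * (quarticMoment μ z z z z z z z z + (d - 1) * quarticMoment μ z z z o z z z o) = 1 ∧
    d * (quarticMoment μ z z z z z z z z + (d - 1) * quarticMoment μ z o z z z o z z) = 1 ∧
    d * (quarticMoment μ z o z z z o z z + (d - 1) * quarticMoment μ z o z o z o z o) = 1 ∧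
    d * (quarticMoment μ z o z z z o z z + (d - 1) * quarticMoment μ z o z o z o o z) = 0 := by
  have hne {a b : n} (h : a ≠ b) : a = b ↔ z = o := iff_of_false h hzo
  have hself {a b : n} : a = a ↔ b = b := iff_of_true rfl rfl
  refine ⟨?_, ?_, ?_, ?_⟩
  · refine (Fintype.sum_sum_eq_of_diag_of_offDiag (f := fun j l => quarticMoment μ z z j l z z j l)
      (fun j => quarticMoment_congr_aligned μ Iff.rfl hself)
      (fun j l h => quarticMoment_congr_aligned μ Iff.rfl (hne h))).symm.trans ?_
    simpa [kdelta] using sum_sum_quarticMoment_rows μ z z z z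
  · refine (Fintype.sum_sum_eq_of_diag_of_offDiag (f := fun i k => quarticMoment μ i k z z i k z z)
      (fun i => quarticMoment_congr_aligned μ hself Iff.rfl)
      (fun i k h => quarticMoment_congr_aligned μ (hne h) Iff.rfl)).symm.trans ?_
    simpa [kdelta] using sum_sum_quarticMoment_cols μ z z z z
  · refine (Fintype.sum_sum_eq_of_diag_of_offDiag (f := fun j l => quarticMoment μ z o j l z o j l)
      (fun j => quarticMoment_congr_aligned μ Iff.rfl hself)
      (fun j l h => quarticMoment_congr_aligned μ Iff.rfl (hne h))).symm.trans ?_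
    simpa [kdelta] using sum_sum_quarticMoment_rows μ z o z o
  · refine (Fintype.sum_sum_eq_of_diag_of_offDiag (f := fun j l => quarticMoment μ z o l j z o j l)
      (fun j => quarticMoment_congr_aligned μ Iff.rfl hself)
      (fun j l h => quarticMoment_congr_swapped μ Iff.rfl (hne (Ne.symm h)))).symm.trans ?_
    simpa [kdelta, hzo, quarticMoment_swap μ o z] using sum_sum_quarticMoment_rows μ o z z o

theorem quarticMoment_reference_values {z o : n} (hzo : z ≠ o) :
    quarticMoment μ z z z z z z z z = 2 / (Fintype.card n * (Fintype.card n + 1)) ∧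
    quarticMoment μ z z z o z z z o = 1 / (Fintype.card n * (Fintype.card n + 1)) ∧
    quarticMoment μ z o z z z o z z = 1 / (Fintype.card n * (Fintype.card n + 1)) ∧
    quarticMoment μ z o z o z o z o = 1 / ((Fintype.card n : ℂ) ^ 2 - 1) ∧
    quarticMoment μ z o z o z o o z = -1 / (Fintype.card n * ((Fintype.card n : ℂ) ^ 2 - 1)) := by
  obtain ⟨e₁, e₂, e₃, e₄⟩ := quarticMoment_linear_relations μ hzo
  have e₅ := quarticMoment_diag_eq_two_mul μ hzo z
  set d : ℂ := (Fintype.card n : ℂ)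
  have hcard : 1 < Fintype.card n := Fintype.one_lt_card_iff.mpr ⟨z, o, hzo⟩
  have hd : d ≠ 0 := Nat.cast_ne_zero.mpr (by omega)
  have hd₁ : d + 1 ≠ 0 := Nat.cast_add_one_ne_zero _
  have hd₂ : d ^ 2 - 1 ≠ 0 := natCast_sq_sub_one_ne_zero hcard
  have hB : quarticMoment μ z o z z z o z z * (d * (d + 1)) = 1 := by
    linear_combination e₂ - d * e₅
  refine ⟨?_, ?_, ?_, ?_, ?_⟩
  · rw [eq_div_iff (mul_ne_zero hd hd₁)]
    linear_combination d * (d + 1) * e₅ + 2 * hB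
  · have hBB : quarticMoment μ z z z o z z z o = quarticMoment μ z o z z z o z z :=
      mul_left_cancel₀ (mul_ne_zero hd hd₂) (by linear_combination (d + 1) * (e₁ - e₂))
    rw [eq_div_iff (mul_ne_zero hd hd₁), hBB, hB]
  · rw [eq_div_iff (mul_ne_zero hd hd₁), hB]
  · rw [eq_div_iff hd₂]
    exact mul_left_cancel₀ hd (by linear_combination (d + 1) * e₃ - hB)
  · rw [eq_div_iff (mul_ne_zero hd hd₂)]
    linear_combination (d + 1) * e₄ - hB

theorem quarticMoment_aligned_eq_weingartenSum (hn : 1 < Fintype.card n) (i₁ i₂ j₁ j₂ : n) :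
    quarticMoment μ i₁ i₂ j₁ j₂ i₁ i₂ j₁ j₂ = weingartenSum i₁ i₂ j₁ j₂ i₁ i₂ j₁ j₂ := by
  obtain ⟨z, o, hzo⟩ := Fintype.exists_pair_of_one_lt_card hn
  obtain ⟨hA, hB, hB', hC, -⟩ := quarticMoment_reference_values μ hzo
  have hd : (Fintype.card n : ℂ) ≠ 0 := Nat.cast_ne_zero.mpr (by omega)
  have hd₁ : (Fintype.card n : ℂ) + 1 ≠ 0 := Nat.cast_add_one_ne_zero _
  have hd₂ := natCast_sq_sub_one_ne_zero hn
  have hne {a b : n} (h : a ≠ b) : a = b ↔ z = o := iff_of_false h hzo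
  have hself {a b : n} : a = a ↔ b = b := iff_of_true rfl rfl
  rcases eq_or_ne i₁ i₂ with rfl | hi <;> rcases eq_or_ne j₁ j₂ with rfl | hj
  · rw [quarticMoment_congr_aligned μ (k₁ := z) (l₁ := z) hself hself, hA]
    simp only [weingartenSum, kdelta_self, mul_one]
    field_simp
    ring
  · rw [quarticMoment_congr_aligned μ (k₁ := z) (l₁ := z) hself (hne hj), hB]
    simp only [weingartenSum, kdelta_self, kdelta_of_ne hj, kdelta_of_ne hj.symm, mul_one,
      mul_zero, add_zero, zero_add]
    field_simp
    ring
  · rw [quarticMoment_congr_aligned μ (k₁ := z) (l₁ := z) (hne hi) hself, hB']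
    simp only [weingartenSum, kdelta_self, kdelta_of_ne hi, kdelta_of_ne hi.symm, mul_one,
      mul_zero, add_zero]
    field_simp
    ring
  · rw [quarticMoment_congr_aligned μ (hne hi) (hne hj), hC]
    simp [weingartenSum, kdelta_self, kdelta_of_ne hi, kdelta_of_ne hi.symm, kdelta_of_ne hj,
      kdelta_of_ne hj.symm]

theorem quarticMoment_swapped_eq_weingartenSum (hn : 1 < Fintype.card n) (i₁ i₂ j₁ j₂ : n) :
    quarticMoment μ i₁ i₂ j₁ j₂ i₁ i₂ j₂ j₁ = weingartenSum i₁ i₂ j₁ j₂ i₁ i₂ j₂ j₁ := by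
  rcases eq_or_ne j₁ j₂ with rfl | hj
  · exact quarticMoment_aligned_eq_weingartenSum μ hn i₁ i₂ j₁ j₁
  rcases eq_or_ne i₁ i₂ with rfl | hi
  · rw [quarticMoment_swap_conj, weingartenSum_swap_conj]
    exact quarticMoment_aligned_eq_weingartenSum μ hn i₁ i₁ j₁ j₂
  obtain ⟨z, o, hzo⟩ := Fintype.exists_pair_of_one_lt_card hn
  rw [quarticMoment_congr_swapped μ (iff_of_false hi hzo) (iff_of_false hj hzo),
    (quarticMoment_reference_values μ hzo).2.2.2.2]
  simp [weingartenSum, kdelta_self, kdelta_of_ne hi, kdelta_of_ne hi.symm, kdelta_of_ne hj,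
    kdelta_of_ne hj.symm, neg_div]

theorem quarticMoment_eq_weingartenSum (hn : 1 < Fintype.card n)
    (i₁ i₂ j₁ j₂ i₁' i₂' j₁' j₂' : n) :
    quarticMoment μ i₁ i₂ j₁ j₂ i₁' i₂' j₁' j₂' = weingartenSum i₁ i₂ j₁ j₂ i₁' i₂' j₁' j₂' := by
  by_cases hrow : ({i₁, i₂} : Multiset n) = {i₁', i₂'}
  swap
  · rw [quarticMoment_eq_zero_of_rows_ne μ hrow, weingartenSum_eq_zero_of_rows_ne hrow]
  by_cases hcol : ({j₁, j₂} : Multiset n) = {j₁', j₂'}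
  swap
  · rw [quarticMoment_eq_zero_of_cols_ne μ hcol, weingartenSum_eq_zero_of_cols_ne hcol]
  rw [Multiset.pair_eq_pair_iff] at hrow hcol
  rcases hrow with ⟨rfl, rfl⟩ | ⟨rfl, rfl⟩ <;> rcases hcol with ⟨rfl, rfl⟩ | ⟨rfl, rfl⟩
  · exact quarticMoment_aligned_eq_weingartenSum μ hn ..
  · exact quarticMoment_swapped_eq_weingartenSum μ hn ..
  · rw [quarticMoment_swap_conj, weingartenSum_swap_conj]
    exact quarticMoment_swapped_eq_weingartenSum μ hn ..
  · rw [quarticMoment_swap_conj, weingartenSum_swap_conj]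
    exact quarticMoment_aligned_eq_weingartenSum μ hn ..

end Haar

end Moments

end Matrix.UnitaryGroup

/-- **Second-moment Weingarten formula** for the unitary group, with
`Wg(id) = 1/(d²−1)` and `Wg(transposition) = −1/(d(d²−1))`. -/
theorem weingarten_second_moment (d : ℕ) (hd : 2 ≤ d)
    (i₁ i₂ j₁ j₂ i₁' i₂' j₁' j₂' : Fin d)
    (μ : Measure (Matrix.unitaryGroup (Fin d) ℂ))
    [μ.IsHaarMeasure] [IsProbabilityMeasure μ] :
    ∫ U : Matrix.unitaryGroup (Fin d) ℂ,
        (U : Matrix (Fin d) (Fin d) ℂ) i₁ j₁ * (U : Matrix (Fin d) (Fin d) ℂ) i₂ j₂ *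
          conj ((U : Matrix (Fin d) (Fin d) ℂ) i₁' j₁') *
          conj ((U : Matrix (Fin d) (Fin d) ℂ) i₂' j₂') ∂μ
      = (kdelta i₁ i₁' * kdelta i₂ i₂' * kdelta j₁ j₁' * kdelta j₂ j₂'
            + kdelta i₁ i₂' * kdelta i₂ i₁' * kdelta j₁ j₂' * kdelta j₂ j₁')
            / ((d : ℂ) ^ 2 - 1)
        - (kdelta i₁ i₁' * kdelta i₂ i₂' * kdelta j₁ j₂' * kdelta j₂ j₁'
            + kdelta i₁ i₂' * kdelta i₂ i₁' * kdelta j₁ j₁' * kdelta j₂ j₂')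
            / ((d : ℂ) * ((d : ℂ) ^ 2 - 1)) := by
  have : BorelSpace (Matrix.unitaryGroup (Fin d) ℂ) := ⟨rfl⟩
  have h := Matrix.UnitaryGroup.quarticMoment_eq_weingartenSum μ
    (by rw [Fintype.card_fin]; omega) i₁ i₂ j₁ j₂ i₁' i₂' j₁' j₂'
  rwa [Matrix.UnitaryGroup.weingartenSum, Fintype.card_fin] at h
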